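/- arXiv:2512.21800 — 2 statements merged into one kernel-verified Lean document; each statement's English description precedes it below -/
import Mathlib

section
/- Let p ≥ 1 be an integer, 𝐇 a set of graphs, and c ≥ 1 an integer such that every 𝐇-free graph G with ω(G) = 1 satisfies χ(G) ≤ 1 and every 𝐇-free graph G with ω(G) > 1 satisfies χ(G) ≤ c. Then every (pK₂ ∪ 𝐇)-free graph G satisfies χ(G) ≤ C(ω(G)+2p−2, 2p−1) + c·C(ω(G)+2p−2, 2p), where C(a,b) denotes the binomial coefficient. -/
open SimpleGraph

/-- `pK₂`: the disjoint union of `p` copies of the single-edge graph `K₂`. -/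
def pK2 (p : ℕ) : SimpleGraph (Fin p × Fin 2) where
  Adj x y := x.1 = y.1 ∧ x.2 ≠ y.2
  symm := ⟨fun _ _ h => ⟨h.1.symm, h.2.symm⟩⟩
  loopless := ⟨fun _ h => h.2 rfl⟩

/-!
Induction on `p`. If `G` is `((q+1)K₂ ∪ 𝐇)`-free and `xy` is an edge, the common non-neighbours
of `x` and `y` induce a `(qK₂ ∪ 𝐇)`-free graph, since a copy of `qK₂ ∪ H` there together with `xy`
is a copy of `(q+1)K₂ ∪ H`. To colour `G`, fix a maximum clique `Q` and remove its vertices one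
at a time: once a set `T ⊆ Q` is removed, the remaining vertices adjacent to all of `T` either are
adjacent to the next vertex `x` as well, or lie in the set `M` of those non-adjacent to `x`.
Sweeping `M` in the same way along the other vertices `y` of `Q`, every part split off lies in the
common non-neighbourhood of the edge `xy` and has small clique number (together with the swept
vertices of `Q` it forms a clique), while what is left at the end is independent. Summing the
colours gives a recursion in `q`, which the hockey-stick identity solves in binomials.
-/

open Finset

-- `1 + ∑ i ∈ range k, β (i + 2)` colours the vertices removed with a clique vertex `x` while `k`
-- further clique vertices `y` remain: `β (i + 2)` for each edge `xy`, one colour for the rest.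
def sweepBound (β : ℕ → ℕ) (n : ℕ) : ℕ :=
  ∑ k ∈ range n, (1 + ∑ i ∈ range k, β (i + 2))

lemma sweepBound_mono (β : ℕ → ℕ) : Monotone (sweepBound β) :=
  fun _ _ h => sum_le_sum_of_subset (range_mono h)

namespace SimpleGraph

variable {V A B : Type*} {G : SimpleGraph V} {GA : SimpleGraph A} {GB : SimpleGraph B}

def Embedding.sumElim (f : GA ↪g G) (g : GB ↪g G)
    (hfg : ∀ a b, f a ≠ g b ∧ ¬ G.Adj (f a) (g b)) : GA ⊕g GB ↪g G where
  toFun := Sum.elim f g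
  inj' := by
    rintro (a | b) (a' | b') h
    · simp_all
    · exact absurd h (hfg a b').1
    · exact absurd h.symm (hfg a' b).1
    · simp_all
  map_rel_iff' := by
    rintro (a | b) (a' | b')
    · exact f.map_rel_iff
    · exact iff_of_false (hfg a b').2 (by simp)
    · exact iff_of_false (fun h => (hfg a' b).2 h.symm) (by simp)
    · exact g.map_rel_iff

def commonNeighborSet (G : SimpleGraph V) (K : Finset V) : Set V := {v | ∀ k ∈ K, G.Adj k v}

lemma colorable_one_of_cliqueNum_le_one [Finite V] (h : G.cliqueNum ≤ 1) : G.Colorable 1 := by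
  classical
  rw [colorable_one_iff, eq_bot_iff_forall_not_adj]
  intro u v huv
  have := IsClique.card_le_cliqueNum (t := {u, v})
    (tc := by rw [coe_pair]; exact isClique_pair.mpr fun _ => huv)
  rw [card_pair huv.ne] at this
  omega

lemma IsMaximumClique.card_add_card_le [Finite V] {Q K t : Finset V}
    (hQ : G.IsMaximumClique Q) (hK : G.IsClique (K : Set V)) (ht : G.IsClique (t : Set V))
    (hKt : ∀ k ∈ K, ∀ v ∈ t, G.Adj k v) : #t + #K ≤ #Q := by
  classical
  have hdisj : Disjoint t K :=
    Finset.disjoint_left.mpr fun v hvt hvK => G.loopless.irrefl v (hKt v hvK v hvt)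
  have hclique : G.IsClique ((t ∪ K : Finset V) : Set V) := by
    rw [coe_union]
    exact Set.pairwise_union.mpr
      ⟨ht, hK, fun v hv k hk _ => ⟨(hKt k hk v hv).symm, hKt k hk v hv⟩⟩
  rw [← card_union_of_disjoint hdisj]
  exact hQ.maximum _ hclique

lemma cliqueNum_induce_le_of_forall {s : Set V} {n : ℕ}
    (h : ∀ t : Finset V, (t : Set V) ⊆ s → G.IsClique (t : Set V) → #t ≤ n) :
    (G.induce s).cliqueNum ≤ n := by
  obtain ⟨t, ht⟩ := (G.induce s).exists_isNClique_cliqueNum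
  rw [isNClique_induce_iff] at ht
  exact ht.card_eq ▸ h _ (by simp) ht.isClique

lemma Colorable.induce_union {s t : Set V} {a b : ℕ} (hs : (G.induce s).Colorable a)
    (ht : (G.induce t).Colorable b) : (G.induce (s ∪ t)).Colorable (a + b) := by
  classical
  obtain ⟨Cs⟩ := hs
  obtain ⟨Ct⟩ := ht
  let C : (G.induce (s ∪ t)).Coloring (Fin a ⊕ Fin b) := Coloring.mk
    (fun v => if hv : v.1 ∈ s then .inl (Cs ⟨v, hv⟩) else .inr (Ct ⟨v, v.2.resolve_left hv⟩))
    (by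
      rintro ⟨u, hu⟩ ⟨v, hv⟩ huv
      by_cases hus : u ∈ s <;> by_cases hvs : v ∈ s <;>
        simp only [hus, hvs, dite_true, dite_false, ne_eq, reduceCtorEq, not_false_eq_true,
          Sum.inl.injEq, Sum.inr.injEq]
      · exact Cs.valid (v := ⟨u, hus⟩) (w := ⟨v, hvs⟩) huv
      · exact Ct.valid (v := ⟨u, _⟩) (w := ⟨v, _⟩) huv)
  simpa using C.colorable

lemma Colorable.induce_mono {s t : Set V} {n : ℕ} (h : (G.induce t).Colorable n)
    (hst : s ⊆ t) : (G.induce s).Colorable n :=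
  h.of_hom (G.induceHomOfLE hst).toHom

def NonNeighborhoodsColorable (G : SimpleGraph V) (β : ℕ → ℕ) : Prop :=
  ∀ x y (S : Set V), G.Adj x y → (∀ v ∈ S, ¬ G.Adj x v ∧ ¬ G.Adj y v) →
    ∀ n, (G.induce S).cliqueNum ≤ n → (G.induce S).Colorable (β n)

variable [Finite V] {β : ℕ → ℕ} {Q : Finset V}

lemma colorable_nonAdj_inter_commonNeighborSet [DecidableEq V]
    (hβ : G.NonNeighborhoodsColorable β) (hQ : G.IsMaximumClique Q) {x : V} (hx : x ∈ Q) (r : ℕ) :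
    ∀ K : Finset V, K ⊆ Q.erase x → #K + r + 1 = #Q →
      (G.induce ({v | ¬ G.Adj x v} ∩ G.commonNeighborSet K)).Colorable
        (1 + ∑ i ∈ range r, β (i + 2)) := by
  induction r with
  | zero =>
    intro K hK hcard
    have hKQ : K = Q.erase x :=
      eq_of_subset_of_card_le hK (by rw [card_erase_of_mem hx]; omega)
    refine (colorable_one_iff.mpr ?_).mono (by simp)
    ext ⟨u, hxu, hu⟩ ⟨v, hxv, hv⟩
    simp only [comap_adj, Function.Embedding.coe_subtype, bot_adj, iff_false]
    intro huv
    have := hQ.card_add_card_le (t := {u, v}) (K := K) (hQ.isClique.subset (by simp [hKQ]))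
      (by simpa using fun _ => huv) (by simpa using fun k hk => ⟨hu k hk, hv k hk⟩)
    rw [card_pair huv.ne] at this
    omega
  | succ r ih =>
    intro K hK hcard
    obtain ⟨y, hyQ, hyK⟩ : ∃ y ∈ Q.erase x, y ∉ K :=
      exists_of_ssubset <| ssubset_of_subset_of_ne hK <| by
        rintro rfl
        rw [card_erase_of_mem hx] at hcard
        omega
    obtain ⟨hyx, hyQ⟩ := mem_erase.mp hyQ
    have hxy : G.Adj x y := hQ.isClique (mem_coe.mpr hx) (mem_coe.mpr hyQ) hyx.symm
    set S : Set V := {v | ¬ G.Adj x v} ∩ G.commonNeighborSet K ∩ {v | ¬ G.Adj y v}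
    have hS : (G.induce S).Colorable (β (r + 2)) := by
      refine hβ x y S hxy (fun v hv => ⟨hv.1.1, hv.2⟩) _
        (cliqueNum_induce_le_of_forall fun t hts ht => ?_)
      have := hQ.card_add_card_le
        (hQ.isClique.subset (by simpa using hK.trans (erase_subset x Q))) ht
        (fun k hk v hv => (hts hv).1.2 k hk)
      omega
    have hIH := ih (insert y K) (insert_subset (mem_erase.mpr ⟨hyx, hyQ⟩) hK)
      (by rw [card_insert_of_notMem hyK]; omega)
    refine (Colorable.induce_union hIH hS).mono (by rw [sum_range_succ]; omega)
      |>.induce_mono ?_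
    rintro v ⟨hxv, hv⟩
    by_cases hyv : G.Adj y v
    · exact Or.inl ⟨hxv, by simpa [commonNeighborSet, hyv] using hv⟩
    · exact Or.inr ⟨⟨hxv, hv⟩, hyv⟩

lemma colorable_induce_commonNeighborSet [DecidableEq V] (hβ : G.NonNeighborhoodsColorable β)
    (hQ : G.IsMaximumClique Q) (r : ℕ) :
    ∀ T : Finset V, T ⊆ Q → #T + r = #Q →
      (G.induce (G.commonNeighborSet T)).Colorable (sweepBound β r) := by
  induction r with
  | zero =>
    intro T hT hcard
    have hTQ : T = Q := eq_of_subset_of_card_le hT (by omega)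
    refine colorable_zero_iff.mpr ⟨fun ⟨v, hv⟩ => ?_⟩
    have := hQ.card_add_card_le hQ.isClique (t := {v}) (by simp)
      (by simpa [hTQ] using fun k hk => hv k hk)
    simp at this
  | succ r ih =>
    intro T hT hcard
    obtain ⟨x, hxQ, hxT⟩ : ∃ x ∈ Q, x ∉ T :=
      exists_of_ssubset (ssubset_of_subset_of_ne hT (by rintro rfl; omega))
    have hIH := ih (insert x T) (insert_subset hxQ hT)
      (by rw [card_insert_of_notMem hxT]; omega)
    have hM := colorable_nonAdj_inter_commonNeighborSet hβ hQ hxQ r T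
      (subset_erase.mpr ⟨hT, hxT⟩) (by omega)
    refine (Colorable.induce_union hIH hM).mono (sum_range_succ _ r).ge
      |>.induce_mono fun v hv => ?_
    by_cases hxv : G.Adj x v
    · exact Or.inl (by simpa [commonNeighborSet, hxv] using hv)
    · exact Or.inr ⟨hxv, hv⟩

theorem NonNeighborhoodsColorable.colorable_sweepBound (hβ : G.NonNeighborhoodsColorable β) :
    G.Colorable (sweepBound β G.cliqueNum) := by
  classical
  obtain ⟨Q, hQ⟩ := G.maximumClique_exists
  have h := colorable_induce_commonNeighborSet hβ hQ G.cliqueNum ∅ (empty_subset Q)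
    (by simp [maximumClique_card_eq_cliqueNum Q hQ])
  rw [show G.commonNeighborSet ∅ = Set.univ by simp [commonNeighborSet]] at h
  exact (colorable_congr G.induceUnivIso).mp h

end SimpleGraph

section pK2

variable {V A : Type*} {G : SimpleGraph V}

def pK2SumIso (a b : ℕ) : pK2 a ⊕g pK2 b ≃g pK2 (a + b) where
  toEquiv := (Equiv.sumProdDistrib _ _ _).symm.trans (finSumFinEquiv.prodCongr (.refl _))
  map_rel_iff' := by
    rintro (⟨m, t⟩ | ⟨m, t⟩) (⟨m', t'⟩ | ⟨m', t'⟩) <;> simp [pK2, Fin.ext_iff] <;> omega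

def pK2OneEmbedding {x y : V} (hxy : G.Adj x y) : pK2 1 ↪g G where
  toFun z := ![x, y] z.2
  inj' := by
    rintro ⟨m, t⟩ ⟨m', t'⟩ h
    fin_cases m; fin_cases m'; fin_cases t <;> fin_cases t' <;> simp_all [hxy.ne, hxy.ne.symm]
  map_rel_iff' := by
    rintro ⟨m, t⟩ ⟨m', t'⟩
    fin_cases m; fin_cases m'; fin_cases t <;> fin_cases t' <;> simp [pK2] <;>
      first | exact hxy | exact hxy.symm

lemma isEmpty_embedding_of_isEmpty_sum_pK2_zero {F : SimpleGraph A}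
    (h : IsEmpty ((pK2 0 ⊕g F) ↪g G)) : IsEmpty (F ↪g G) :=
  ⟨fun f => h.false <| Embedding.sumElim (RelEmbedding.ofIsEmpty _ _) f fun a => isEmptyElim a⟩

lemma isEmpty_embedding_induce_of_isEmpty_sum_pK2_succ {q : ℕ} {F : SimpleGraph A} {x y : V}
    {S : Set V} (h : IsEmpty ((pK2 (q + 1) ⊕g F) ↪g G)) (hxy : G.Adj x y)
    (hS : ∀ v ∈ S, ¬ G.Adj x v ∧ ¬ G.Adj y v) : IsEmpty ((pK2 q ⊕g F) ↪g G.induce S) := by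
  refine ⟨fun e => h.false ?_⟩
  let φ : pK2 (q + 1) ⊕g F ≃g (pK2 q ⊕g F) ⊕g pK2 1 :=
    ((pK2SumIso q 1).symm.sumCongr .refl).trans
      (Iso.sumAssoc.trans ((Iso.refl.sumCongr Iso.sumComm).trans Iso.sumAssoc.symm))
  refine (Embedding.sumElim ((Embedding.induce S).comp e) (pK2OneEmbedding hxy)
    fun z ⟨_, t⟩ => ?_).comp φ.toEmbedding
  have hx := (hS _ (e z).2).1
  have hy := (hS _ (e z).2).2
  fin_cases t
  · exact ⟨fun (h : (e z : V) = x) => hy (h ▸ hxy.symm), fun (h : G.Adj (e z) x) => hx h.symm⟩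
  · exact ⟨fun (h : (e z : V) = y) => hx (h ▸ hxy), fun (h : G.Adj (e z) y) => hy h.symm⟩

end pK2

lemma sum_range_choose_add_mul_choose (c m n : ℕ) :
    ∑ k ∈ range n, ((k + m).choose m + c * (k + m).choose (m + 1)) =
      (n + m).choose (m + 1) + c * (n + m).choose (m + 2) := by
  induction n with
  | zero => simp [Nat.choose_eq_zero_of_lt]
  | succ n ih =>
    rw [sum_range_succ, ih, show n + 1 + m = n + m + 1 by ring,
      Nat.choose_succ_succ' (n + m) (m + 1), Nat.choose_succ_succ' (n + m) m]
    ring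

def pK2Bound (c : ℕ) : ℕ → ℕ → ℕ
  | 0 => fun _ => c
  | q + 1 => sweepBound (pK2Bound c q)

lemma one_add_sum_pK2Bound (c q k : ℕ) :
    1 + ∑ i ∈ range k, pK2Bound c q (i + 2) =
      (k + 2 * q).choose (2 * q) + c * (k + 2 * q).choose (2 * q + 1) := by
  induction q generalizing k with
  | zero => simp [pK2Bound, mul_comm]
  | succ q ih =>
    have hstep (i : ℕ) : pK2Bound c (q + 1) (i + 2) = (i + 1 + (2 * q + 1)).choose (2 * q + 1) +
        c * (i + 1 + (2 * q + 1)).choose (2 * q + 1 + 1) := by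
      simp only [pK2Bound, sweepBound, ih, sum_range_choose_add_mul_choose]
      ring_nf
    have hsum := sum_range_choose_add_mul_choose c (2 * q + 1) (k + 1)
    simp only [hstep]
    rw [sum_range_succ', zero_add, Nat.choose_self, Nat.choose_succ_self, mul_zero,
      add_zero] at hsum
    rw [add_comm, hsum]
    ring_nf

lemma pK2Bound_succ (c q n : ℕ) :
    pK2Bound c (q + 1) n =
      (n + 2 * q).choose (2 * q + 1) + c * (n + 2 * q).choose (2 * q + 2) := by
  simp only [pK2Bound, sweepBound, one_add_sum_pK2Bound, sum_range_choose_add_mul_choose]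

theorem colorable_pK2Bound {ι : Type} {W : ι → Type} (H : ∀ i, SimpleGraph (W i)) {c : ℕ}
    (hc : 1 ≤ c)
    (hfc : ∀ (V : Type) [Fintype V] (G : SimpleGraph V),
      (∀ i, IsEmpty (H i ↪g G)) → 1 < G.cliqueNum → G.chromaticNumber ≤ (c : ℕ∞))
    (q : ℕ) {V : Type} [Fintype V] (G : SimpleGraph V)
    (hG : ∀ i, IsEmpty ((pK2 q ⊕g H i) ↪g G))
    {n : ℕ} (hn : G.cliqueNum ≤ n) : G.Colorable (pK2Bound c q n) := by
  induction q generalizing V G n with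
  | zero =>
    by_cases hω : 1 < G.cliqueNum
    · exact chromaticNumber_le_iff_colorable.mp
        (hfc V G (fun i => isEmpty_embedding_of_isEmpty_sum_pK2_zero (hG i)) hω)
    · exact (colorable_one_of_cliqueNum_le_one (not_lt.mp hω)).mono hc
  | succ q ih =>
    refine (NonNeighborhoodsColorable.colorable_sweepBound ?_).mono (sweepBound_mono _ hn)
    intro x y S hxy hS m hm
    classical
    exact ih (G.induce S)
      (fun i => isEmpty_embedding_induce_of_isEmpty_sum_pK2_succ (hG i) hxy hS) hm

theorem stmt_3_general (p : ℕ) (hp : 1 ≤ p) (c : ℕ) (hc : 1 ≤ c)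
    {ι : Type} (W : ι → Type) (H : ∀ i, SimpleGraph (W i))
    (hfc : ∀ (V : Type) [Fintype V] (G : SimpleGraph V),
      (∀ i, IsEmpty (H i ↪g G)) → 1 < G.cliqueNum → G.chromaticNumber ≤ (c : ℕ∞))
    (V : Type) [Fintype V] (G : SimpleGraph V)
    (hG : ∀ i, IsEmpty ((pK2 p ⊕g H i) ↪g G)) :
    G.chromaticNumber ≤
      ((Nat.choose (G.cliqueNum + 2 * p - 2) (2 * p - 1) +
        c * Nat.choose (G.cliqueNum + 2 * p - 2) (2 * p) : ℕ) : ℕ∞) := by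
  obtain ⟨q, rfl⟩ : ∃ q, p = q + 1 := ⟨p - 1, by omega⟩
  rw [chromaticNumber_le_iff_colorable]
  convert colorable_pK2Bound H hc hfc (q + 1) G hG le_rfl using 1
  rw [pK2Bound_succ]
  congr 2

theorem stmt_3 (p : ℕ) (hp : 1 ≤ p) (c : ℕ) (hc : 1 ≤ c)
    {ι : Type} (W : ι → Type) [∀ i, Fintype (W i)] (H : ∀ i, SimpleGraph (W i))
    (hf1 : ∀ (V : Type) [Fintype V] (G : SimpleGraph V),
      (∀ i, IsEmpty (H i ↪g G)) → G.cliqueNum = 1 → G.chromaticNumber ≤ (1 : ℕ∞))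
    (hfc : ∀ (V : Type) [Fintype V] (G : SimpleGraph V),
      (∀ i, IsEmpty (H i ↪g G)) → 1 < G.cliqueNum → G.chromaticNumber ≤ (c : ℕ∞))
    (V : Type) [Fintype V] (G : SimpleGraph V)
    (hG : ∀ i, IsEmpty ((pK2 p ⊕g H i) ↪g G)) :
    G.chromaticNumber ≤
      ((Nat.choose (G.cliqueNum + 2 * p - 2) (2 * p - 1) +
        c * Nat.choose (G.cliqueNum + 2 * p - 2) (2 * p) : ℕ) : ℕ∞) :=
  stmt_3_general p hp c hc W H hfc V G hG
end

section
/- Define f_p^W : ℕ → ℕ for p ≥ 1 by f_1^W(ω) = 1 and f_{p+1}^W(ω) = C(ω,2)·f_p^W(ω) + ω, and let f_{pK₂}(ω) = C(ω−1+2(p−1), 2(p−1)). For all integers p ≥ 1 and ω ≥ 1: if ω > 2 and p > 2 then f_p^W(ω) > f_{pK₂}(ω), and otherwise (i.e., if ω ≤ 2 or p ≤ 2) f_p^W(ω) = f_{pK₂}(ω). -/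
/-! With `n = ω - 1` and `k = 2(p - 1)`, passing from `p` to `p + 1` multiplies
`C(n + k, k)` by `(n+k+1)(n+k+2) / ((k+1)(k+2))`, which for `n, k ≥ 2` is at most
`C(n+1, 2) = C(ω, 2)`, the factor in the recursion for `fW`; the extra summand `ω`
of that recursion makes the inequality strict from `p = 3` on. For `ω ≤ 2` and
`p ≤ 2` both sides are computed in closed form. -/

/-- Wagon's bounding function: `fW 1 ω = 1` and `fW (p+1) ω = C(ω,2) * fW p ω + ω`
for `p ≥ 1` (the value at `p = 0` is irrelevant). -/
def fW : ℕ → ℕ → ℕ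
  | 0, _ => 1
  | 1, _ => 1
  | p + 2, ω => Nat.choose ω 2 * fW (p + 1) ω + ω

theorem fW_succ_succ (p ω : ℕ) : fW (p + 2) ω = Nat.choose ω 2 * fW (p + 1) ω + ω := rfl

theorem fW_two (ω : ℕ) : fW 2 ω = Nat.choose (ω + 1) 2 := by
  rw [fW_succ_succ, Nat.choose_succ_succ', Nat.choose_one_right, fW, mul_one, add_comm]

theorem fW_succ_one : ∀ q, fW (q + 1) 1 = 1
  | 0 => rfl
  | q + 1 => by rw [fW_succ_succ, fW_succ_one q]; rfl

theorem fW_succ_two : ∀ q, fW (q + 1) 2 = 2 * q + 1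
  | 0 => rfl
  | q + 1 => by rw [fW_succ_succ, fW_succ_two q, Nat.choose_self]; ring

theorem succ_mul_succ_succ_mul_choose_add_two (n k : ℕ) :
    (k + 1) * (k + 2) * Nat.choose (n + k + 2) (k + 2) =
      (n + k + 1) * (n + k + 2) * Nat.choose (n + k) k := by
  have h₁ := Nat.add_one_mul_choose_eq (n + k + 1) (k + 1)
  have h₂ := Nat.add_one_mul_choose_eq (n + k) k
  calc (k + 1) * (k + 2) * Nat.choose (n + k + 2) (k + 2)
      = (k + 1) * ((n + k + 2) * Nat.choose (n + k + 1) (k + 1)) := by rw [h₁]; ring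
    _ = (n + k + 2) * ((n + k + 1) * Nat.choose (n + k) k) := by rw [h₂]; ring
    _ = (n + k + 1) * (n + k + 2) * Nat.choose (n + k) k := by ring

theorem choose_add_two_le_choose_two_mul (n k : ℕ) (hn : 2 ≤ n) (hk : 2 ≤ k) :
    Nat.choose (n + k + 2) (k + 2) ≤ Nat.choose (n + 1) 2 * Nat.choose (n + k) k := by
  have hpair : (n + 1) * n = Nat.choose (n + 1) 2 * 2 := by
    simpa using Nat.add_one_mul_choose_eq n 1
  have hratio : 2 * ((n + k + 1) * (n + k + 2)) ≤ (k + 1) * (k + 2) * ((n + 1) * n) := by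
    obtain ⟨a, rfl⟩ := Nat.exists_eq_add_of_le' hn
    obtain ⟨b, rfl⟩ := Nat.exists_eq_add_of_le' hk
    nlinarith [Nat.zero_le (a * b), Nat.zero_le (a * b * (a + b))]
  refine Nat.le_of_mul_le_mul_left ?_ (by positivity : 0 < 2 * ((k + 1) * (k + 2)))
  calc 2 * ((k + 1) * (k + 2)) * Nat.choose (n + k + 2) (k + 2)
      = 2 * ((n + k + 1) * (n + k + 2)) * Nat.choose (n + k) k := by
        rw [mul_assoc, succ_mul_succ_succ_mul_choose_add_two]; ring
    _ ≤ (k + 1) * (k + 2) * ((n + 1) * n) * Nat.choose (n + k) k :=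
        Nat.mul_le_mul_right _ hratio
    _ = 2 * ((k + 1) * (k + 2)) * (Nat.choose (n + 1) 2 * Nat.choose (n + k) k) := by
        rw [hpair]; ring

theorem choose_add_two_lt_fW_succ_succ {n k q : ℕ} (hn : 2 ≤ n) (hk : 2 ≤ k)
    (h : Nat.choose (n + k) k ≤ fW (q + 1) (n + 1)) :
    Nat.choose (n + k + 2) (k + 2) < fW (q + 2) (n + 1) :=
  calc Nat.choose (n + k + 2) (k + 2)
      ≤ Nat.choose (n + 1) 2 * Nat.choose (n + k) k := choose_add_two_le_choose_two_mul n k hn hk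
    _ ≤ Nat.choose (n + 1) 2 * fW (q + 1) (n + 1) := Nat.mul_le_mul_left _ h
    _ < fW (q + 2) (n + 1) := by rw [fW_succ_succ]; omega

theorem choose_lt_fW {n q : ℕ} (hn : 2 ≤ n) (hq : 1 ≤ q) :
    Nat.choose (n + 2 * (q + 1)) (2 * (q + 1)) < fW (q + 2) (n + 1) := by
  induction q, hq using Nat.le_induction with
  | base => exact choose_add_two_lt_fW_succ_succ hn le_rfl (fW_two (n + 1)).ge
  | succ q _ ih =>
    rw [mul_add_one 2 (q + 1), ← add_assoc]
    exact choose_add_two_lt_fW_succ_succ hn (by omega) ih.le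

theorem stmt_8 (p ω : ℕ) (hp : 1 ≤ p) (hω : 1 ≤ ω) :
    (2 < ω → 2 < p →
      Nat.choose (ω - 1 + 2 * (p - 1)) (2 * (p - 1)) < fW p ω) ∧
    (ω ≤ 2 ∨ p ≤ 2 →
      fW p ω = Nat.choose (ω - 1 + 2 * (p - 1)) (2 * (p - 1))) := by
  obtain ⟨q, rfl⟩ := Nat.exists_eq_add_of_le' hp
  obtain ⟨n, rfl⟩ := Nat.exists_eq_add_of_le' hω
  simp only [Nat.add_sub_cancel]
  refine ⟨fun hn hq => ?_, ?_⟩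
  · obtain ⟨r, rfl⟩ : ∃ r, q = r + 1 := ⟨q - 1, by omega⟩
    exact choose_lt_fW (by omega) (by omega)
  · rintro (hn | hq)
    · obtain rfl | rfl : n = 0 ∨ n = 1 := by omega
      · simp [fW_succ_one]
      · rw [fW_succ_two, add_comm 1, Nat.choose_succ_self_right]
    · obtain rfl | rfl : q = 0 ∨ q = 1 := by omega
      · simp [fW]
      · rw [fW_two, add_assoc]
end
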